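/- Let α : ℝ → ℝ be a smooth function with α' = τ and cos α(t) ≠ 0 for all t, and define the Monge evolute η = ξ + r·n − r·tan(α)·b. Then ‖η(t) − ξ(t)‖ = 1/(k(t)·|cos α(t)|) for all t, and ‖η'(t)‖ = |(1/(k·cos α))'(t)|. In particular η'(t) = 0 (a cusp of the Monge evolute) exactly at the critical points of the function k·cos α. -/

import Mathlib

open scoped RealInnerProductSpace

noncomputable section

/-- The determinant of the 3×3 matrix with rows `u`, `v`, `w`. -/
def det3 (u v w : EuclideanSpace ℝ (Fin 3)) : ℝ :=
  u 0 * (v 1 * w 2 - v 2 * w 1) - u 1 * (v 0 * w 2 - v 2 * w 0)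
    + u 2 * (v 0 * w 1 - v 1 * w 0)

/-- The cross product of two vectors in `ℝ³`. -/
def cross3 (u v : EuclideanSpace ℝ (Fin 3)) : EuclideanSpace ℝ (Fin 3) :=
  (WithLp.equiv 2 (Fin 3 → ℝ)).symm
    ![u 1 * v 2 - u 2 * v 1, u 2 * v 0 - u 0 * v 2, u 0 * v 1 - u 1 * v 0]

section Aux

lemma inner3 (u v : EuclideanSpace ℝ (Fin 3)) : ⟪u, v⟫ = u 0 * v 0 + u 1 * v 1 + u 2 * v 2 := by
  simp [PiLp.inner_apply, Fin.sum_univ_three, RCLike.inner_apply, conj_trivial]; ring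

lemma cross3_apply (u v : EuclideanSpace ℝ (Fin 3)) (i : Fin 3) :
    cross3 u v i = ![u 1 * v 2 - u 2 * v 1, u 2 * v 0 - u 0 * v 2, u 0 * v 1 - u 1 * v 0] i := by
  simp [cross3]

lemma inner_cross3_left (u v : EuclideanSpace ℝ (Fin 3)) : ⟪cross3 u v, u⟫ = 0 := by
  simp [inner3, cross3_apply, Fin.sum_univ_three]; ring

lemma inner_cross3_right (u v : EuclideanSpace ℝ (Fin 3)) : ⟪cross3 u v, v⟫ = 0 := by
  simp [inner3, cross3_apply, Fin.sum_univ_three]; ring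

lemma inner_cross3_self (u v : EuclideanSpace ℝ (Fin 3)) :
    ⟪cross3 u v, cross3 u v⟫ = ⟪u,u⟫ * ⟪v,v⟫ - ⟪u,v⟫ ^ 2 := by
  rw [inner3, inner3, inner3, inner3]; simp [cross3_apply, Fin.sum_univ_three]; ring

lemma det3_eq (u v w : EuclideanSpace ℝ (Fin 3)) : det3 u v w = ⟪cross3 u v, w⟫ := by
  simp [det3, inner3, cross3_apply, Fin.sum_univ_three]; ring

lemma cross3_cross3 (a b c : EuclideanSpace ℝ (Fin 3)) :
    cross3 a (cross3 b c) = ⟪a,c⟫ • b - ⟪a,b⟫ • c := by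
  ext i; fin_cases i <;> simp [inner3, cross3_apply, Fin.sum_univ_three] <;> ring

lemma cross3_self (u : EuclideanSpace ℝ (Fin 3)) : cross3 u u = 0 := by
  ext i; fin_cases i <;> simp [cross3_apply] <;> ring

lemma cross3_add_right (u v w : EuclideanSpace ℝ (Fin 3)) :
    cross3 u (v + w) = cross3 u v + cross3 u w := by
  ext i; fin_cases i <;> simp [cross3_apply] <;> ring

lemma cross3_smul_right (a : ℝ) (u v : EuclideanSpace ℝ (Fin 3)) :
    cross3 u (a • v) = a • cross3 u v := by
  ext i; fin_cases i <;> simp [cross3_apply] <;> ring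

lemma cross3_smul_left (a : ℝ) (u v : EuclideanSpace ℝ (Fin 3)) :
    cross3 (a • u) v = a • cross3 u v := by
  ext i; fin_cases i <;> simp [cross3_apply] <;> ring

lemma hasDerivAt_comp_proj {f : ℝ → EuclideanSpace ℝ (Fin 3)} {f' : EuclideanSpace ℝ (Fin 3)}
    {t : ℝ} (hf : HasDerivAt f f' t) (i : Fin 3) :
    HasDerivAt (fun s => f s i) (f' i) t := by
  have := (EuclideanSpace.proj i (𝕜 := ℝ)).hasFDerivAt.comp_hasDerivAt t hf
  exact this

lemma hasDerivAt_cross {f g : ℝ → EuclideanSpace ℝ (Fin 3)}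
    {f' g' : EuclideanSpace ℝ (Fin 3)} {t : ℝ}
    (hf : HasDerivAt f f' t) (hg : HasDerivAt g g' t) :
    HasDerivAt (fun s => cross3 (f s) (g s)) (cross3 f' (g t) + cross3 (f t) g') t := by
  have h0 := hasDerivAt_comp_proj hf 0
  have h1 := hasDerivAt_comp_proj hf 1
  have h2 := hasDerivAt_comp_proj hf 2
  have g0 := hasDerivAt_comp_proj hg 0
  have g1 := hasDerivAt_comp_proj hg 1
  have g2 := hasDerivAt_comp_proj hg 2
  have key : HasDerivAt (fun s : ℝ => (fun i => cross3 (f s) (g s) i : Fin 3 → ℝ))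
      (fun i => (cross3 f' (g t) + cross3 (f t) g') i) t := by
    rw [hasDerivAt_pi]
    intro i
    fin_cases i
    · have e1 : (fun s : ℝ => cross3 (f s) (g s) 0) = fun s => f s 1 * g s 2 - f s 2 * g s 1 := by
        funext s; simp [cross3_apply]
      have e2 : (cross3 f' (g t) + cross3 (f t) g') 0
          = f' 1 * g t 2 + f t 1 * g' 2 - (f' 2 * g t 1 + f t 2 * g' 1) := by
        simp [cross3_apply, PiLp.add_apply]; ring
      exact (show HasDerivAt (fun s => cross3 (f s) (g s) 0) ((cross3 f' (g t) + cross3 (f t) g') 0) t by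
        rw [e1, e2]; exact (h1.mul g2).sub (h2.mul g1))
    · have e1 : (fun s : ℝ => cross3 (f s) (g s) 1) = fun s => f s 2 * g s 0 - f s 0 * g s 2 := by
        funext s; simp [cross3_apply]
      have e2 : (cross3 f' (g t) + cross3 (f t) g') 1
          = f' 2 * g t 0 + f t 2 * g' 0 - (f' 0 * g t 2 + f t 0 * g' 2) := by
        simp [cross3_apply, PiLp.add_apply]; ring
      exact (show HasDerivAt (fun s => cross3 (f s) (g s) 1) ((cross3 f' (g t) + cross3 (f t) g') 1) t by
        rw [e1, e2]; exact (h2.mul g0).sub (h0.mul g2))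
    · have e1 : (fun s : ℝ => cross3 (f s) (g s) 2) = fun s => f s 0 * g s 1 - f s 1 * g s 0 := by
        funext s; simp [cross3_apply]
      have e2 : (cross3 f' (g t) + cross3 (f t) g') 2
          = f' 0 * g t 1 + f t 0 * g' 1 - (f' 1 * g t 0 + f t 1 * g' 0) := by
        simp [cross3_apply, PiLp.add_apply]; ring
      exact (show HasDerivAt (fun s => cross3 (f s) (g s) 2) ((cross3 f' (g t) + cross3 (f t) g') 2) t by
        rw [e1, e2]; exact (h0.mul g1).sub (h1.mul g0))
  have := ((EuclideanSpace.equiv (Fin 3) ℝ).symm.toContinuousLinearMap).hasFDerivAt.comp_hasDerivAt t key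
  exact this

end Aux

set_option maxHeartbeats 1000000 in
theorem stmt_15
    (ξ : ℝ → EuclideanSpace ℝ (Fin 3))
    (hξ : ContDiff ℝ (⊤ : ℕ∞) ξ)
    (hunit : ∀ t, ‖deriv ξ t‖ = 1)
    (k τ r : ℝ → ℝ) (N B : ℝ → EuclideanSpace ℝ (Fin 3))
    (hk : ∀ t, k t = ‖deriv (deriv ξ) t‖)
    (hkpos : ∀ t, 0 < k t)
    (hN : ∀ t, N t = (k t)⁻¹ • deriv (deriv ξ) t)
    (hB : ∀ t, B t = cross3 (deriv ξ t) (N t))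
    (hτ : ∀ t, τ t = det3 (deriv ξ t) (deriv (deriv ξ) t) (deriv (deriv (deriv ξ)) t) / (k t) ^ 2)
    (hτne : ∀ t, τ t ≠ 0)
    (hr : ∀ t, r t = (k t)⁻¹)
    (α : ℝ → ℝ) (hα : ContDiff ℝ (⊤ : ℕ∞) α)
    (hα' : ∀ t, deriv α t = τ t)
    (hcos : ∀ t, Real.cos (α t) ≠ 0)
    (η : ℝ → EuclideanSpace ℝ (Fin 3))
    (hη : ∀ t, η t = ξ t + r t • N t - (r t * Real.tan (α t)) • B t)
 :
    ∀ t, ‖η t - ξ t‖ = 1 / (k t * |Real.cos (α t)|) ∧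
      ‖deriv η t‖ = |deriv (fun s => 1 / (k s * Real.cos (α s))) t| ∧
      (deriv η t = 0 ↔ deriv (fun s => k s * Real.cos (α s)) t = 0) := by
  have hkne : ∀ s, k s ≠ 0 := fun s => (hkpos s).ne'
  have h1 := contDiff_infty_iff_deriv.1 (hξ.of_le (by simp))
  have h2 := contDiff_infty_iff_deriv.1 h1.2
  have h3 := contDiff_infty_iff_deriv.1 h2.2
  set T := deriv ξ with hTdef
  set A2 := deriv T with hA2def
  set A3 := deriv A2 with hA3def
  have hdξ : ∀ s, HasDerivAt ξ (T s) s := fun s => (h1.1 s).hasDerivAt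
  have hdT : ∀ s, HasDerivAt T (A2 s) s := fun s => (h2.1 s).hasDerivAt
  have hdA2 : ∀ s, HasDerivAt A2 (A3 s) s := fun s => (h3.1 s).hasDerivAt
  have hTT : ∀ s, ⟪T s, T s⟫ = 1 := fun s => by
    rw [real_inner_self_eq_norm_mul_norm, hunit s, one_mul]
  have hTA2 : ∀ s, ⟪T s, A2 s⟫ = 0 := by
    intro s
    have h0 : HasDerivAt (fun u => ⟪T u, T u⟫) 0 s := by
      rw [show (fun u => ⟪T u, T u⟫) = fun _ => (1:ℝ) from funext hTT]
      exact hasDerivAt_const s 1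
    have h := (((hdT s).inner ℝ (hdT s)).unique h0)
    have hc := real_inner_comm (A2 s) (T s)
    linarith
  have hA2A2 : ∀ s, ⟪A2 s, A2 s⟫ = k s ^ 2 := fun s => by
    rw [real_inner_self_eq_norm_mul_norm, hk s]; ring
  have hTA3 : ∀ s, ⟪T s, A3 s⟫ = -(k s ^ 2) := by
    intro s
    have h0 : HasDerivAt (fun u => ⟪T u, A2 u⟫) 0 s := by
      rw [show (fun u => ⟪T u, A2 u⟫) = fun _ => (0:ℝ) from funext hTA2]
      exact hasDerivAt_const s 0
    have h := (((hdT s).inner ℝ (hdA2 s)).unique h0)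
    have h2 := hA2A2 s
    have hc := real_inner_comm (A2 s) (T s)
    linarith
  have hkfun : k = fun s => Real.sqrt ⟪A2 s, A2 s⟫ := by
    funext s
    rw [hk s, real_inner_self_eq_norm_mul_norm, Real.sqrt_mul_self (norm_nonneg _)]
  have hdk : ∀ s, HasDerivAt k (⟪A2 s, A3 s⟫ / k s) s := by
    intro s
    have hne : ⟪A2 s, A2 s⟫ ≠ 0 := by rw [hA2A2 s]; exact pow_ne_zero 2 (hkne s)
    have h := (Real.hasDerivAt_sqrt hne).comp s ((hdA2 s).inner ℝ (hdA2 s))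
    have hsq : Real.sqrt ⟪A2 s, A2 s⟫ = k s := by
      rw [hA2A2 s, Real.sqrt_sq (hkpos s).le]
    have h2 : HasDerivAt (fun u => Real.sqrt ⟪A2 u, A2 u⟫) (⟪A2 s, A3 s⟫ / k s) s := by
      refine h.congr_deriv ?_
      rw [hsq, real_inner_comm (A3 s) (A2 s)]
      field_simp
      ring
    nth_rewrite 1 [hkfun]
    exact h2
  have hdr : ∀ s, HasDerivAt r (-(⟪A2 s, A3 s⟫ / k s) / k s ^ 2) s := by
    intro s
    have : r = fun u => (k u)⁻¹ := funext hr
    nth_rewrite 1 [this]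
    exact (hdk s).inv (hkne s)
  have hNfun : N = fun s => (k s)⁻¹ • A2 s := funext hN
  have hA2N : ∀ s, A2 s = k s • N s := fun s => by
    rw [hN s, smul_smul, mul_inv_cancel₀ (hkne s), one_smul]
  have hNN : ∀ s, ⟪N s, N s⟫ = 1 := fun s => by
    rw [hN s, real_inner_smul_left, real_inner_smul_right, hA2A2 s]
    field_simp [hkne s]
  have hTN : ∀ s, ⟪T s, N s⟫ = 0 := fun s => by
    rw [hN s, real_inner_smul_right, hTA2 s, mul_zero]
  have hNT : ∀ s, ⟪N s, T s⟫ = 0 := fun s => by rw [real_inner_comm]; exact hTN s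
  have hA3N : ∀ s, ⟪A3 s, N s⟫ = ⟪A2 s, A3 s⟫ / k s := fun s => by
    rw [hN s, real_inner_smul_right, real_inner_comm]
    field_simp [hkne s]
  have hBB : ∀ s, ⟪B s, B s⟫ = 1 := fun s => by
    rw [hB s, inner_cross3_self, hTT s, hNN s, hTN s]; ring
  have hTB : ∀ s, ⟪T s, B s⟫ = 0 := fun s => by
    rw [hB s, real_inner_comm]; exact inner_cross3_left _ _
  have hNB : ∀ s, ⟪N s, B s⟫ = 0 := fun s => by
    rw [hB s, real_inner_comm]; exact inner_cross3_right _ _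
  have hBT : ∀ s, ⟪B s, T s⟫ = 0 := fun s => by rw [real_inner_comm]; exact hTB s
  have hBN : ∀ s, ⟪B s, N s⟫ = 0 := fun s => by rw [real_inner_comm]; exact hNB s
  have hA3B : ∀ s, ⟪A3 s, B s⟫ = k s * τ s := by
    intro s
    have h := hτ s
    rw [det3_eq] at h
    have hcr : cross3 (T s) (A2 s) = k s • B s := by
      rw [hA2N s, cross3_smul_right, hB s]
    rw [hcr, real_inner_smul_left] at h
    rw [real_inner_comm]
    apply mul_left_cancel₀ (hkne s)
    have h2 : k s ^ 2 * τ s = k s * ⟪B s, A3 s⟫ := by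
      rw [h]; field_simp [hkne s]
    rw [← h2]; ring
  have hdecomp : ∀ s, A3 s
      = (-(k s ^ 2)) • T s + (⟪A2 s, A3 s⟫ / k s) • N s + (k s * τ s) • B s := by
    intro s
    set u := A3 s - ((-(k s ^ 2)) • T s + (⟪A2 s, A3 s⟫ / k s) • N s + (k s * τ s) • B s)
      with hu
    have hA3T : ⟪A3 s, T s⟫ = -(k s ^ 2) := by rw [real_inner_comm]; exact hTA3 s
    have hut : ⟪u, T s⟫ = 0 := by
      rw [hu, inner_sub_left, inner_add_left, inner_add_left, real_inner_smul_left,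
        real_inner_smul_left, real_inner_smul_left, hTT s, hNT s, hBT s, hA3T]
      ring
    have hun : ⟪u, N s⟫ = 0 := by
      rw [hu, inner_sub_left, inner_add_left, inner_add_left, real_inner_smul_left,
        real_inner_smul_left, real_inner_smul_left, hTN s, hNN s, hBN s, hA3N s]
      ring
    have hub : ⟪u, B s⟫ = 0 := by
      rw [hu, inner_sub_left, inner_add_left, inner_add_left, real_inner_smul_left,
        real_inner_smul_left, real_inner_smul_left, hTB s, hNB s, hBB s, hA3B s]
      ring
    have hcz : cross3 u (B s) = 0 := by
      rw [hB s, cross3_cross3]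
      rw [show ⟪u, N s⟫ = 0 from hun, show ⟪u, T s⟫ = 0 from hut]
      simp
    have hnorm : ⟪u, u⟫ = 0 := by
      have h1 := inner_cross3_self u (B s)
      rw [hcz, hBB s, hub] at h1
      simp only [inner_zero_left, mul_one, ne_eq, OfNat.ofNat_ne_zero,
        not_false_eq_true, zero_pow, sub_zero] at h1
      linarith [h1]
    have hu0 : u = 0 := inner_self_eq_zero.1 hnorm
    have := sub_eq_zero.1 (hu ▸ hu0)
    exact this
  have hdN : ∀ s, HasDerivAt N ((-(k s)) • T s + τ s • B s) s := by
    intro s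
    have h := ((hdk s).inv (hkne s)).smul (hdA2 s)
    have hdec := hdecomp s
    have ha2 := hA2N s
    nth_rewrite 1 [hNfun]
    refine HasDerivAt.congr_deriv h ?_
    generalize ⟪A2 s, A3 s⟫ = X at hdec ⊢
    rw [hdec, ha2]
    simp only [Pi.inv_apply]
    match_scalars
    all_goals field_simp [hkne s]
    all_goals try ring
  have hdB : ∀ s, HasDerivAt B ((-(τ s)) • N s) s := by
    intro s
    have hBfun : B = fun u => cross3 (T u) (N u) := funext fun u => hB u
    have h := hasDerivAt_cross (hdT s) (hdN s)
    nth_rewrite 1 [hBfun]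
    refine HasDerivAt.congr_deriv h ?_
    rw [hA2N s, cross3_smul_left, cross3_self, cross3_add_right, cross3_smul_right,
      cross3_smul_right, hB s, cross3_cross3, cross3_self, hTN s, hTT s]
    module
  have hdα : ∀ s, HasDerivAt α (τ s) s := fun s => by
    have h := (hα.differentiable (by simp) s).hasDerivAt
    rwa [hα' s] at h
  have hdtan : ∀ s, HasDerivAt (fun u => Real.tan (α u)) (1 / Real.cos (α s) ^ 2 * τ s) s :=
    fun s => (Real.hasDerivAt_tan (hcos s)).comp s (hdα s)
  have hdcos : ∀ s, HasDerivAt (fun u => Real.cos (α u)) (-Real.sin (α s) * τ s) s :=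
    fun s => (Real.hasDerivAt_cos (α s)).comp s (hdα s)
  have hdη : ∀ s, HasDerivAt η
      ((-(⟪A2 s, A3 s⟫ / k s) / k s ^ 2 + (k s)⁻¹ * τ s * Real.tan (α s)) •
        (N s - Real.tan (α s) • B s)) s := by
    intro s
    have hηfun : η = fun u => ξ u + r u • N u - (r u * Real.tan (α u)) • B u := funext hη
    have h := ((hdξ s).add ((hdr s).smul (hdN s))).sub (((hdr s).mul (hdtan s)).smul (hdB s))
    nth_rewrite 1 [hηfun]
    refine HasDerivAt.congr_deriv h ?_
    have hsec : 1 / Real.cos (α s) ^ 2 = 1 + Real.tan (α s) ^ 2 := by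
      rw [← Real.inv_one_add_tan_sq (hcos s), one_div, inv_inv]
    simp only [Pi.mul_apply]
    rw [hr s, hsec]
    generalize ⟪A2 s, A3 s⟫ = X
    match_scalars
    all_goals field_simp [hkne s]
    all_goals try ring
  intro t
  have hON : ∀ a b : ℝ, ‖a • N t + b • B t‖ = Real.sqrt (a ^ 2 + b ^ 2) := by
    intro a b
    have hin : ⟪a • N t + b • B t, a • N t + b • B t⟫ = a ^ 2 + b ^ 2 := by
      simp only [inner_add_left, inner_add_right, real_inner_smul_left, real_inner_smul_right,
        hNN t, hBB t, hNB t, hBN t]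
      ring
    rw [norm_eq_sqrt_real_inner, hin]
  refine ⟨?_, ?_, ?_⟩
  · have hsub : η t - ξ t = r t • N t + (-(r t * Real.tan (α t))) • B t := by
      rw [hη t, neg_smul]; abel
    rw [hsub, hON]
    have hsec2 : (1 + Real.tan (α t) ^ 2) = (Real.cos (α t))⁻¹ ^ 2 := by
      rw [inv_pow, ← Real.inv_one_add_tan_sq (hcos t), inv_inv]
    have habs : (|Real.cos (α t)|)⁻¹ ^ 2 = (Real.cos (α t))⁻¹ ^ 2 := by
      rw [inv_pow, inv_pow, sq_abs]
    have heq : r t ^ 2 + (-(r t * Real.tan (α t))) ^ 2 = (1 / (k t * |Real.cos (α t)|)) ^ 2 := by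
      rw [hr t, one_div, mul_inv, mul_pow, habs, ← hsec2]
      ring
    have hpos : (0:ℝ) ≤ 1 / (k t * |Real.cos (α t)|) := by
      have := hkpos t
      have : 0 < |Real.cos (α t)| := abs_pos.2 (hcos t)
      positivity
    rw [heq, Real.sqrt_sq hpos]
  · rw [(hdη t).deriv]
    have hdf : HasDerivAt (fun s => 1 / (k s * Real.cos (α s)))
        ((-(⟪A2 t, A3 t⟫ / k t) / k t ^ 2 + (k t)⁻¹ * τ t * Real.tan (α t)) / Real.cos (α t))
        t := by
      have h := ((hdk t).mul (hdcos t)).inv (mul_ne_zero (hkne t) (hcos t))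
      have hfun : (fun s => 1 / (k s * Real.cos (α s)))
          = fun s => (k s * Real.cos (α s))⁻¹ := by
        funext u; rw [one_div]
      rw [hfun]
      refine h.congr_deriv ?_
      simp only [Pi.mul_apply]
      rw [Real.tan_eq_sin_div_cos]
      generalize ⟪A2 t, A3 t⟫ = X
      field_simp [hkne t, hcos t]
      ring
    rw [hdf.deriv, abs_div]
    have hvec : (N t - Real.tan (α t) • B t) = (1:ℝ) • N t + (-(Real.tan (α t))) • B t := by
      module
    rw [hvec, norm_smul, hON]
    have hsq : Real.sqrt ((1:ℝ) ^ 2 + (-(Real.tan (α t))) ^ 2) = 1 / |Real.cos (α t)| := by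
      have hsec2 : (1 + Real.tan (α t) ^ 2) = (Real.cos (α t))⁻¹ ^ 2 := by
        rw [inv_pow, ← Real.inv_one_add_tan_sq (hcos t), inv_inv]
      have habs : (|Real.cos (α t)|)⁻¹ ^ 2 = (Real.cos (α t))⁻¹ ^ 2 := by
        rw [inv_pow, inv_pow, sq_abs]
      have hsec : (1:ℝ) ^ 2 + (-(Real.tan (α t))) ^ 2 = (1 / |Real.cos (α t)|) ^ 2 := by
        rw [one_div, habs, ← hsec2]
        ring
      have hpos : (0:ℝ) ≤ 1 / |Real.cos (α t)| := by
        have : 0 < |Real.cos (α t)| := abs_pos.2 (hcos t)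
        positivity
      rw [hsec, Real.sqrt_sq hpos]
    rw [hsq, Real.norm_eq_abs, mul_one_div]
  · rw [(hdη t).deriv]
    have hdg : HasDerivAt (fun s => k s * Real.cos (α s))
        (⟪A2 t, A3 t⟫ / k t * Real.cos (α t) + k t * (-Real.sin (α t) * τ t)) t :=
      (hdk t).mul (hdcos t)
    rw [hdg.deriv]
    have hw : N t - Real.tan (α t) • B t ≠ 0 := by
      intro h0
      have h1 : ⟪N t - Real.tan (α t) • B t, N t⟫ = 1 := by
        rw [inner_sub_left, real_inner_smul_left, hNN t, hBN t]; ring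
      rw [h0, inner_zero_left] at h1
      norm_num at h1
    have hrel : ⟪A2 t, A3 t⟫ / k t * Real.cos (α t) + k t * (-Real.sin (α t) * τ t)
        = (-(k t ^ 2 * Real.cos (α t)))
            * (-(⟪A2 t, A3 t⟫ / k t) / k t ^ 2 + (k t)⁻¹ * τ t * Real.tan (α t)) := by
      rw [Real.tan_eq_sin_div_cos]
      generalize ⟪A2 t, A3 t⟫ = X
      field_simp [hkne t, hcos t]
      ring
    constructor
    · intro h
      rcases smul_eq_zero.1 h with hc | hv
      · rw [hrel, hc, mul_zero]
      · exact absurd hv hw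
    · intro h
      rw [hrel] at h
      have hcc : -(⟪A2 t, A3 t⟫ / k t) / k t ^ 2 + (k t)⁻¹ * τ t * Real.tan (α t) = 0 := by
        rcases mul_eq_zero.1 h with h' | h'
        · exfalso
          have hz : k t ^ 2 * Real.cos (α t) = 0 := by linarith [neg_eq_zero.1 h']
          rcases mul_eq_zero.1 hz with h'' | h''
          · exact (pow_ne_zero 2 (hkne t)) h''
          · exact hcos t h''
        · exact h'
      rw [hcc, zero_smul]
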